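/- For probability distributions p, q on a finite set X with q(x) > 0 for all x, the Donsker–Varadhan variational formula holds: −KL(p ∥ q) = inf over x : X → ℝ of [ log( Σ_{y∈X} q(y) e^{x(y)} ) − Σ_{y∈X} p(y) x(y) ], where KL(p∥q) = Σ_y p(y) log(p(y)/q(y)). -/
import Mathlib


/-- Donsker–Varadhan variational formula on a finite set:
`−KL(p∥q) = inf_x [ log(Σ_y q(y) e^{x(y)}) − Σ_y p(y) x(y) ]`. -/
theorem donsker_varadhan_finite
    {X : Type*} [Fintype X] [Nonempty X] (p q : X → ℝ)
    (hp : ∀ x, 0 ≤ p x) (hps : ∑ x, p x = 1)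
    (hq : ∀ x, 0 < q x) (hqs : ∑ x, q x = 1) :
    (⨅ x : X → ℝ,
        (Real.log (∑ y, q y * Real.exp (x y)) - ∑ y, p y * x y))
      = -∑ y, p y * Real.log (p y / q y) := by
  set KL := ∑ y, p y * Real.log (p y / q y) with hKLdef
  have hS : ∀ x : X → ℝ, 0 < ∑ y, q y * Real.exp (x y) := fun x =>
    Finset.sum_pos (fun y _ => mul_pos (hq y) (Real.exp_pos _)) Finset.univ_nonempty
  -- Lower bound: every value of the objective is at least -KL
  have hlow : ∀ x : X → ℝ,
      -KL ≤ Real.log (∑ y, q y * Real.exp (x y)) - ∑ y, p y * x y := by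
    intro x
    set S := ∑ y, q y * Real.exp (x y) with hSdef
    have hS0 : 0 < S := hS x
    have key : ∑ y, (p y * x y - p y * Real.log (p y / q y) - p y * Real.log S)
        ≤ ∑ y, (q y * Real.exp (x y) / S - p y) := by
      apply Finset.sum_le_sum
      intro y _
      rcases eq_or_lt_of_le (hp y) with h0 | h0
      · have : 0 ≤ q y * Real.exp (x y) / S :=
          div_nonneg (mul_pos (hq y) (Real.exp_pos _)).le hS0.le
        simp [← h0]
        linarith
      · have ht : 0 < q y * Real.exp (x y) / (p y * S) :=
          div_pos (mul_pos (hq y) (Real.exp_pos _)) (mul_pos h0 hS0)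
        have hlog1 := Real.log_le_sub_one_of_pos ht
        have hlog : Real.log (q y * Real.exp (x y) / (p y * S))
            = x y - Real.log (p y / q y) - Real.log S := by
          rw [Real.log_div (mul_pos (hq y) (Real.exp_pos _)).ne' (mul_pos h0 hS0).ne',
              Real.log_mul (hq y).ne' (Real.exp_pos _).ne',
              Real.log_mul h0.ne' hS0.ne',
              Real.log_div h0.ne' (hq y).ne', Real.log_exp]
          ring
        have h1 : p y * Real.log (q y * Real.exp (x y) / (p y * S))
            ≤ p y * (q y * Real.exp (x y) / (p y * S) - 1) :=
          mul_le_mul_of_nonneg_left hlog1 (hp y)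
        rw [hlog] at h1
        have h2 : p y * (q y * Real.exp (x y) / (p y * S) - 1)
            = q y * Real.exp (x y) / S - p y := by
          field_simp
        calc p y * x y - p y * Real.log (p y / q y) - p y * Real.log S
            = p y * (x y - Real.log (p y / q y) - Real.log S) := by ring
          _ ≤ q y * Real.exp (x y) / S - p y := by rw [← h2]; exact h1
    have hL : ∑ y, (p y * x y - p y * Real.log (p y / q y) - p y * Real.log S)
        = (∑ y, p y * x y) - KL - Real.log S := by
      rw [hKLdef]
      rw [Finset.sum_sub_distrib, Finset.sum_sub_distrib, ← Finset.sum_mul, hps, one_mul]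
    have hR : ∑ y, (q y * Real.exp (x y) / S - p y) = 0 := by
      rw [Finset.sum_sub_distrib, ← Finset.sum_div, ← hSdef, div_self hS0.ne', hps]
      ring
    rw [hL, hR] at key
    linarith
  -- Upper bound: for each ε > 0 there is a test function within ε of -KL
  have hup : ∀ ε > (0 : ℝ),
      (⨅ x : X → ℝ, (Real.log (∑ y, q y * Real.exp (x y)) - ∑ y, p y * x y))
        ≤ -KL + ε := by
    intro ε hε
    set x : X → ℝ := fun y => if p y = 0 then Real.log ε else Real.log (p y / q y)
      with hxdef
    have hSle : ∑ y, q y * Real.exp (x y) ≤ 1 + ε := by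
      have hterm : ∀ y, q y * Real.exp (x y) ≤ p y + q y * ε := by
        intro y
        by_cases h : p y = 0
        · simp [hxdef, h, Real.exp_log hε]
        · have hpy : 0 < p y := (hp y).lt_of_ne (Ne.symm h)
          have : Real.exp (x y) = p y / q y := by
            simp [hxdef, h, Real.exp_log (div_pos hpy (hq y))]
          rw [this, mul_div_cancel₀ _ (hq y).ne']
          nlinarith [mul_pos (hq y) hε]
      calc ∑ y, q y * Real.exp (x y) ≤ ∑ y, (p y + q y * ε) :=
            Finset.sum_le_sum fun y _ => hterm y
        _ = 1 + ε := by
            rw [Finset.sum_add_distrib, hps, ← Finset.sum_mul, hqs, one_mul]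
    have hpx : ∑ y, p y * x y = KL := by
      apply Finset.sum_congr rfl
      intro y _
      by_cases h : p y = 0 <;> simp [hxdef, h]
    have hlogS : Real.log (∑ y, q y * Real.exp (x y)) ≤ ε :=
      (Real.log_le_sub_one_of_pos (hS x)).trans (by linarith)
    have hbdd : BddBelow (Set.range fun x : X → ℝ =>
        Real.log (∑ y, q y * Real.exp (x y)) - ∑ y, p y * x y) := by
      refine ⟨-KL, ?_⟩
      rintro v ⟨x', rfl⟩
      exact hlow x'
    have := ciInf_le hbdd x
    rw [hpx] at this
    linarith
  refine le_antisymm ?_ (le_ciInf hlow)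
  exact le_of_forall_pos_le_add fun ε hε => hup ε hε
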